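/- arXiv:1801.10418 — 2 statements merged into one kernel-verified Lean document; each statement's English description precedes it below -/
import Mathlib

section
/- If n = 2^k, then the fully balanced tree T^bal_k is the unique rooted binary tree with n leaves attaining the minimal Sackin index k·2^k; every other rooted binary tree with 2^k leaves has strictly larger Sackin index. -/
/-- Rooted binary trees: a single node (leaf) or a root with two subtrees. -/
inductive BTree : Type
  | leaf : BTree
  | node : BTree → BTree → BTree

namespace BTree

/-- Number of leaves of a rooted binary tree. -/
def leaves : BTree → ℕ
  | leaf => 1
  | node l r => l.leaves + r.leaves

/-- Sum of depths of all leaves, where the root of the tree is at depth `d`. -/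
def sackinAux : BTree → ℕ → ℕ
  | leaf, d => d
  | node l r, d => sackinAux l (d + 1) + sackinAux r (d + 1)

/-- Sackin index: the sum of the depths of all leaves. -/
def sackin (t : BTree) : ℕ := sackinAux t 0

/-- Sum, over all internal nodes `u`, of the number of leaves below `u`. -/
def internalLeafSum : BTree → ℕ
  | leaf => 0
  | node l r => (l.leaves + r.leaves) + internalLeafSum l + internalLeafSum r

/-- Sum, over all nodes `v`, of the number of leaves below `v`. -/
def allNodesLeafSum : BTree → ℕ
  | leaf => 1
  | node l r => (l.leaves + r.leaves) + allNodesLeafSum l + allNodesLeafSum r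

/-- Sum, over all non-root nodes `v`, of the number of leaves below `v`. -/
def nonRootLeafSum : BTree → ℕ
  | leaf => 0
  | node l r => allNodesLeafSum l + allNodesLeafSum r

/-- Height: maximal number of edges on a root-to-leaf path. -/
def height : BTree → ℕ
  | leaf => 0
  | node l r => max l.height r.height + 1

/-- Subtree at a given path from the root (`false` = left child, `true` = right child). -/
def subtreeAt : BTree → List Bool → Option BTree
  | t, [] => some t
  | leaf, _ :: _ => none
  | node l _, false :: p => subtreeAt l p
  | node _ r, true :: p => subtreeAt r p

/-- Number of cherries (pairs of sibling leaves) whose two leaves are at depth `d`. -/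
def cherriesAt : BTree → ℕ → ℕ
  | leaf, _ => 0
  | node leaf leaf, d => if d = 1 then 1 else 0
  | node _ _, 0 => 0
  | node l r, d + 1 => cherriesAt l d + cherriesAt r d

/-- `DeleteCherry t d t'` : `t'` is obtained from `t` by deleting a cherry `[u,v]`
(both leaves at depth `d`) together with the two pendant edges, turning the
parent `w` into a leaf. -/
inductive DeleteCherry : BTree → ℕ → BTree → Prop
  | base : DeleteCherry (BTree.node BTree.leaf BTree.leaf) 1 BTree.leaf
  | left {l l' r : BTree} {d : ℕ} :
      DeleteCherry l d l' → DeleteCherry (BTree.node l r) (d + 1) (BTree.node l' r)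
  | right {l r r' : BTree} {d : ℕ} :
      DeleteCherry r d r' → DeleteCherry (BTree.node l r) (d + 1) (BTree.node l r')

/-- Caterpillar tree with `n` leaves (for `n ≥ 1`): the unique rooted binary tree
with exactly one cherry. -/
def caterpillar : ℕ → BTree
  | 0 => BTree.leaf
  | 1 => BTree.leaf
  | n + 2 => BTree.node (caterpillar (n + 1)) BTree.leaf

/-- Fully balanced tree of height `k`, with `2^k` leaves all at depth `k`. -/
def balanced : ℕ → BTree
  | 0 => BTree.leaf
  | k + 1 => BTree.node (balanced k) (balanced k)

/-- Isomorphism of rooted binary trees (children are unordered). -/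
inductive Iso : BTree → BTree → Prop
  | leaf : Iso BTree.leaf BTree.leaf
  | node {a b c d : BTree} : Iso a c → Iso b d → Iso (BTree.node a b) (BTree.node c d)
  | swap {a b c d : BTree} : Iso a d → Iso b c → Iso (BTree.node a b) (BTree.node c d)

end BTree

open BTree

lemma leaves_pos (t : BTree) : 1 ≤ t.leaves := by
  induction t with
  | leaf => simp [leaves]
  | node l r hl hr => simp [leaves]; omega

lemma sackinAux_eq (t : BTree) (d : ℕ) :
    sackinAux t d = sackinAux t 0 + d * t.leaves := by
  induction t generalizing d with
  | leaf => simp [sackinAux, leaves]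
  | node l r hl hr =>
    simp only [sackinAux, leaves]
    rw [hl (d + 1), hr (d + 1), hl 1, hr 1]
    ring

lemma sackin_node (l r : BTree) :
    (node l r).sackin = l.sackin + r.sackin + (l.leaves + r.leaves) := by
  simp only [sackin, sackinAux, sackinAux_eq l 1, sackinAux_eq r 1]
  ring

lemma leaves_balanced (k : ℕ) : (balanced k).leaves = 2 ^ k := by
  induction k with
  | zero => simp [balanced, leaves]
  | succ k ih => simp [balanced, leaves, ih, pow_succ]; ring

lemma sackin_balanced (k : ℕ) : (balanced k).sackin = k * 2 ^ k := by
  induction k with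
  | zero => simp [balanced, sackin, sackinAux]
  | succ k ih =>
    show (node (balanced k) (balanced k)).sackin = _
    rw [sackin_node, ih, leaves_balanced, pow_succ]
    ring

lemma sackinAux_iso {s t : BTree} (h : Iso s t) (d : ℕ) :
    sackinAux s d = sackinAux t d := by
  induction h generalizing d with
  | leaf => rfl
  | node h1 h2 ih1 ih2 => simp only [sackinAux, ih1, ih2]
  | swap h1 h2 ih1 ih2 => simp only [sackinAux, ih1, ih2]; ring

lemma leaves_iso {s t : BTree} (h : Iso s t) : s.leaves = t.leaves := by
  induction h with
  | leaf => rfl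
  | node h1 h2 ih1 ih2 => simp [leaves, ih1, ih2]
  | swap h1 h2 ih1 ih2 => simp [leaves, ih1, ih2]; ring

lemma iso_refl (t : BTree) : Iso t t := by
  induction t with
  | leaf => exact Iso.leaf
  | node l r hl hr => exact Iso.node hl hr

/-- Convexity step: for positive reals, `(a+b)·log((a+b)/2) ≤ a·log a + b·log b`. -/
lemma mul_log_convex {a b : ℝ} (ha : 0 < a) (hb : 0 < b) :
    (a + b) * Real.log ((a + b) / 2) ≤ a * Real.log a + b * Real.log b := by
  have h := Real.convexOn_mul_log.2 (Set.mem_Ici.mpr ha.le) (Set.mem_Ici.mpr hb.le)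
    (by norm_num : (0:ℝ) ≤ 1/2) (by norm_num : (0:ℝ) ≤ 1/2) (by norm_num)
  simp only [smul_eq_mul] at h
  have : (1/2 : ℝ) * a + (1/2) * b = (a + b) / 2 := by ring
  rw [this] at h
  nlinarith [h]

/-- Strict convexity step. -/
lemma mul_log_strict_convex {a b : ℝ} (ha : 0 < a) (hb : 0 < b) (hab : a ≠ b) :
    (a + b) * Real.log ((a + b) / 2) < a * Real.log a + b * Real.log b := by
  have h := Real.strictConvexOn_mul_log.2 (Set.mem_Ici.mpr ha.le) (Set.mem_Ici.mpr hb.le)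
    hab (by norm_num : (0:ℝ) < 1/2) (by norm_num : (0:ℝ) < 1/2) (by norm_num)
  simp only [smul_eq_mul] at h
  have : (1/2 : ℝ) * a + (1/2) * b = (a + b) / 2 := by ring
  rw [this] at h
  nlinarith [h]

/-- Entropy lower bound on the Sackin index. -/
lemma sackin_lower (t : BTree) :
    (t.leaves : ℝ) * Real.log t.leaves ≤ (t.sackin : ℝ) * Real.log 2 := by
  induction t with
  | leaf => simp [leaves, sackin, sackinAux]
  | node l r hl hr =>
    have hal : (0:ℝ) < l.leaves := by exact_mod_cast leaves_pos l
    have har : (0:ℝ) < r.leaves := by exact_mod_cast leaves_pos r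
    have hsum : (0:ℝ) < (l.leaves : ℝ) + r.leaves := by linarith
    have hconv := mul_log_convex hal har
    have hlog : Real.log ((l.leaves : ℝ) + r.leaves) =
        Real.log (((l.leaves : ℝ) + r.leaves) / 2) + Real.log 2 := by
      rw [Real.log_div (ne_of_gt hsum) (by norm_num)]
      ring
    have : ((node l r).leaves : ℝ) = (l.leaves : ℝ) + r.leaves := by
      simp [leaves]
    rw [this, sackin_node]
    push_cast
    rw [hlog]
    nlinarith [hconv, hl, hr]

lemma log_two_pos : (0:ℝ) < Real.log 2 := Real.log_pos (by norm_num)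

/-- Key step: if a tree with `2^k` leaves has Sackin index `k·2^k`, it is the
balanced tree. -/
lemma min_is_balanced : ∀ (t : BTree) (k : ℕ), t.leaves = 2 ^ k →
    t.sackin = k * 2 ^ k → Iso t (balanced k) := by
  intro t
  induction t with
  | leaf =>
    intro k hle _
    have : k = 0 := by
      by_contra hk
      have : 2 ≤ 2 ^ k := Nat.one_lt_two_pow hk
      simp [leaves] at hle
      omega
    subst this
    exact Iso.leaf
  | node l r hl hr =>
    intro k hle hsk
    have hal : 1 ≤ l.leaves := leaves_pos l
    have har : 1 ≤ r.leaves := leaves_pos r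
    have hle' : l.leaves + r.leaves = 2 ^ k := by simpa [leaves] using hle
    have hk0 : k ≠ 0 := by
      rintro rfl
      simp at hle'
      omega
    obtain ⟨k', rfl⟩ : ∃ k', k = k' + 1 := ⟨k - 1, by omega⟩
    rw [sackin_node, hle'] at hsk
    have hss : l.sackin + r.sackin = k' * 2 ^ (k' + 1) := by
      have : (k' + 1) * 2 ^ (k' + 1) = k' * 2 ^ (k' + 1) + 2 ^ (k' + 1) := by ring
      omega
    -- first show the two leaf counts are equal
    have hab : l.leaves = r.leaves := by
      by_contra hne
      have hne' : (l.leaves : ℝ) ≠ (r.leaves : ℝ) := by exact_mod_cast hne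
      have hal' : (0:ℝ) < l.leaves := by exact_mod_cast hal
      have har' : (0:ℝ) < r.leaves := by exact_mod_cast har
      have hstrict := mul_log_strict_convex hal' har' hne'
      have hsum : (l.leaves : ℝ) + r.leaves = 2 ^ (k' + 1) := by
        exact_mod_cast hle'
      have hdiv : ((2:ℝ) ^ (k' + 1)) / 2 = 2 ^ k' := by
        rw [pow_succ]; ring
      rw [hsum, hdiv, Real.log_pow] at hstrict
      have h1 := sackin_lower l
      have h2 := sackin_lower r
      have hss' : (l.sackin : ℝ) + r.sackin = k' * 2 ^ (k' + 1) := by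
        exact_mod_cast hss
      have : (2:ℝ) ^ (k' + 1) * (k' * Real.log 2) <
          ((l.sackin : ℝ) + r.sackin) * Real.log 2 := by linarith
      rw [hss'] at this
      have : (2:ℝ) ^ (k' + 1) * (k' * Real.log 2) <
          k' * 2 ^ (k' + 1) * Real.log 2 := this
      nlinarith [this]
    have ha2 : l.leaves = 2 ^ k' := by
      rw [pow_succ] at hle'
      omega
    have hb2 : r.leaves = 2 ^ k' := by
      rw [pow_succ] at hle'
      omega
    -- each subtree attains the minimum
    have hlb : ∀ s : BTree, s.leaves = 2 ^ k' → k' * 2 ^ k' ≤ s.sackin := by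
      intro s hs
      have h1 := sackin_lower s
      rw [hs] at h1
      push_cast at h1
      rw [Real.log_pow] at h1
      have h2 : ((k' * 2 ^ k' : ℕ) : ℝ) * Real.log 2 ≤ (s.sackin : ℝ) * Real.log 2 := by
        push_cast
        nlinarith [h1]
      have := le_of_mul_le_mul_right (by linarith [h2] : ((k' * 2 ^ k' : ℕ) : ℝ) * Real.log 2 ≤ (s.sackin : ℝ) * Real.log 2) log_two_pos
      exact_mod_cast this
    have hbl := hlb l ha2
    have hbr := hlb r hb2
    have hsl : l.sackin = k' * 2 ^ k' := by
      have : k' * 2 ^ (k' + 1) = k' * 2 ^ k' + k' * 2 ^ k' := by ring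
      omega
    have hsr : r.sackin = k' * 2 ^ k' := by
      have : k' * 2 ^ (k' + 1) = k' * 2 ^ k' + k' * 2 ^ k' := by ring
      omega
    exact Iso.node (hl k' ha2 hsl) (hr k' hb2 hsr)

/-- if `n = 2^k` then `T^bal_k` is the unique tree with `n` leaves
attaining the minimal Sackin index `k·2^k`; all other trees are strictly larger. -/
theorem stmt13 (k : ℕ) (t : BTree) (h : t.leaves = 2 ^ k) :
    t.sackin = k * 2 ^ k ↔ Iso t (balanced k) := by
  constructor
  · intro hs
    exact min_is_balanced t k h hs
  · intro hiso
    have h2 : t.sackin = (balanced k).sackin := sackinAux_iso hiso 0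
    rw [h2, sackin_balanced]
end

section
/- A rooted binary tree with n leaves has minimal Sackin index if and only if its height equals k = ⌈log₂ n⌉ and it has exactly n − 2^{k−1} cherries of depth k. -/
open BTree

namespace BTree

def IsSackinMinimal (t : BTree) : Prop :=
  ∀ t' : BTree, t'.leaves = t.leaves → t.sackin ≤ t'.sackin

def minDepth : BTree → ℕ
  | leaf => 0
  | node l r => min l.minDepth r.minDepth + 1

theorem leaves_pos (t : BTree) : 0 < t.leaves := by
  induction t with
  | leaf => simp [leaves]
  | node l r ihl ihr => simp only [leaves]; omega

theorem sackinAux_eq_sackin_add (t : BTree) (d : ℕ) : t.sackinAux d = t.sackin + d * t.leaves := by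
  induction t generalizing d with
  | leaf => simp [sackinAux, sackin, leaves]
  | node l r ihl ihr =>
    simp only [sackin, sackinAux, leaves]
    rw [ihl, ihr, ihl 1, ihr 1]
    ring

theorem sackin_node (l r : BTree) :
    (node l r).sackin = l.sackin + l.leaves + (r.sackin + r.leaves) := by
  rw [sackin, sackinAux, sackinAux_eq_sackin_add, sackinAux_eq_sackin_add]
  ring

theorem leaves_le_two_pow_height (t : BTree) : t.leaves ≤ 2 ^ t.height := by
  induction t with
  | leaf => simp [leaves, height]
  | node l r ihl ihr =>
    have hl : 2 ^ l.height ≤ 2 ^ max l.height r.height :=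
      Nat.pow_le_pow_right two_pos (le_max_left _ _)
    have hr : 2 ^ r.height ≤ 2 ^ max l.height r.height :=
      Nat.pow_le_pow_right two_pos (le_max_right _ _)
    simp only [leaves, height, pow_succ]
    omega

theorem two_le_height_node {l r : BTree} (h : l ≠ leaf ∨ r ≠ leaf) : 2 ≤ (node l r).height := by
  rcases l with _ | ⟨_, _⟩ <;> rcases r with _ | ⟨_, _⟩ <;> simp_all [height]

theorem cherriesAt_zero (t : BTree) : t.cherriesAt 0 = 0 := by
  rcases t with _ | ⟨_ | _, _ | _⟩ <;> rfl

theorem cherriesAt_node_succ {l r : BTree} (h : l ≠ leaf ∨ r ≠ leaf) (d : ℕ) :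
    (node l r).cherriesAt (d + 1) = l.cherriesAt d + r.cherriesAt d := by
  rcases l with _ | ⟨_, _⟩ <;> rcases r with _ | ⟨_, _⟩ <;> first | rfl | simp at h

theorem leaves_mul_succ_le_sackin_add_two_pow (t : BTree) (e : ℕ) :
    t.leaves * (e + 1) ≤ t.sackin + 2 ^ e := by
  induction t generalizing e with
  | leaf => simpa [leaves, sackin, sackinAux] using Nat.lt_two_pow_self (n := e)
  | node l r ihl ihr =>
    rw [sackin_node]
    rcases e with _ | e
    · simp only [leaves]; omega
    · have := ihl e; have := ihr e
      simp only [leaves, pow_succ]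
      nlinarith

theorem sackin_add_two_pow_eq_iff (t : BTree) (e : ℕ) :
    t.sackin + 2 ^ e = t.leaves * (e + 1) ↔ t.height ≤ e ∧ e ≤ t.minDepth + 1 := by
  induction t generalizing e with
  | leaf =>
    simp only [sackin, sackinAux, leaves, height, minDepth]
    rcases e with _ | _ | e
    · simp
    · simp
    · have := Nat.lt_two_pow_self (n := e)
      simp only [pow_succ]
      omega
  | node l r ihl ihr =>
    rw [sackin_node]
    rcases e with _ | e
    · simp only [height, leaves]; omega
    · have := leaves_mul_succ_le_sackin_add_two_pow l e
      have := leaves_mul_succ_le_sackin_add_two_pow r e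
      have key : l.sackin + l.leaves + (r.sackin + r.leaves) + 2 ^ (e + 1)
          = (l.leaves + r.leaves) * (e + 1 + 1) ↔
          l.sackin + 2 ^ e = l.leaves * (e + 1) ∧ r.sackin + 2 ^ e = r.leaves * (e + 1) := by
        constructor
        · intro h; rw [pow_succ] at h; constructor <;> nlinarith
        · rintro ⟨h1, h2⟩; rw [pow_succ]; nlinarith
      simp only [leaves, height, minDepth, key, ihl, ihr]
      omega

theorem two_mul_leaves_le_two_pow_add_cherriesAt (t : BTree) {e : ℕ} (he : 1 ≤ e)
    (ht : t.height ≤ e) : 2 * t.leaves ≤ 2 ^ e + 2 * t.cherriesAt e := by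
  induction t generalizing e with
  | leaf =>
    have := Nat.one_lt_two_pow_iff.mpr (show e ≠ 0 by omega)
    simp only [leaves, cherriesAt]
    omega
  | node l r ihl ihr =>
    by_cases hlr : l = leaf ∧ r = leaf
    · obtain ⟨rfl, rfl⟩ := hlr
      rcases e with _ | _ | e
      · omega
      · simp [leaves, cherriesAt]
      · have := Nat.one_lt_two_pow_iff.mpr (show e + 1 ≠ 0 by omega)
        simp only [leaves, cherriesAt, pow_succ]
        omega
    · have hne : l ≠ leaf ∨ r ≠ leaf := by tauto
      have h2 := two_le_height_node hne
      obtain ⟨e, rfl⟩ : ∃ e', e = e' + 1 := ⟨e - 1, by omega⟩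
      simp only [height] at ht h2
      have := ihl (e := e) (by omega) (by omega)
      have := ihr (e := e) (by omega) (by omega)
      simp only [leaves, cherriesAt_node_succ hne, pow_succ]
      omega

theorem two_mul_leaves_eq_two_pow_add_cherriesAt_iff (t : BTree) {e : ℕ} (he : 1 ≤ e)
    (ht : t.height ≤ e) :
    2 * t.leaves = 2 ^ e + 2 * t.cherriesAt e ↔ e ≤ t.minDepth + 1 := by
  induction t generalizing e with
  | leaf =>
    rcases e with _ | _ | e
    · omega
    · simp [leaves, cherriesAt, minDepth]
    · have := Nat.one_lt_two_pow_iff.mpr (show e + 1 ≠ 0 by omega)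
      simp only [leaves, cherriesAt, minDepth, pow_succ]
      omega
  | node l r ihl ihr =>
    by_cases hlr : l = leaf ∧ r = leaf
    · obtain ⟨rfl, rfl⟩ := hlr
      rcases e with _ | _ | _ | e
      · omega
      · simp [leaves, cherriesAt, minDepth]
      · simp [leaves, cherriesAt, minDepth]
      · have := Nat.one_lt_two_pow_iff.mpr (show e + 1 ≠ 0 by omega)
        simp only [leaves, cherriesAt, minDepth, pow_succ]
        omega
    · have hne : l ≠ leaf ∨ r ≠ leaf := by tauto
      have h2 := two_le_height_node hne
      obtain ⟨e, rfl⟩ : ∃ e', e = e' + 1 := ⟨e - 1, by omega⟩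
      simp only [height] at ht h2
      have := two_mul_leaves_le_two_pow_add_cherriesAt l (e := e) (by omega) (by omega)
      have := two_mul_leaves_le_two_pow_add_cherriesAt r (e := e) (by omega) (by omega)
      have := ihl (e := e) (by omega) (by omega)
      have := ihr (e := e) (by omega) (by omega)
      simp only [leaves, minDepth, cherriesAt_node_succ hne, pow_succ]
      omega

theorem exists_leaves_eq_height_le_le_minDepth {e n : ℕ} (h₁ : 2 ^ e ≤ 2 * n) (h₂ : n ≤ 2 ^ e) :
    ∃ t : BTree, t.leaves = n ∧ t.height ≤ e ∧ e ≤ t.minDepth + 1 := by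
  induction e generalizing n with
  | zero => exact ⟨leaf, by simp_all [leaves]; omega, le_refl _, by simp [minDepth]⟩
  | succ e ih =>
    rw [pow_succ] at h₁ h₂
    by_cases hn : n = 1
    · have : e = 0 := by
        by_contra he
        have := Nat.one_lt_two_pow_iff.mpr he
        omega
      exact ⟨leaf, by simp [leaves, hn], by simp [height], by simp [minDepth, this]⟩
    · -- so that `omega` sees `2 ^ e ≤ 2 * (n / 2)`
      have hpow : 2 ^ e = 1 ∨ 2 ∣ 2 ^ e := by
        rcases e with _ | e
        · simp
        · exact .inr (dvd_pow_self 2 (by omega))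
      obtain ⟨a, ha, hah, hamin⟩ := ih (n := (n + 1) / 2) (by omega) (by omega)
      obtain ⟨b, hb, hbh, hbmin⟩ := ih (n := n / 2) (by omega) (by omega)
      exact ⟨node a b, by simp only [leaves]; omega, by simp only [height]; omega,
        by simp only [minDepth]; omega⟩

theorem two_pow_clog_le_two_mul {n : ℕ} (hn : 0 < n) : 2 ^ Nat.clog 2 n ≤ 2 * n := by
  rcases Nat.lt_or_ge 1 n with hn1 | hn1
  · have := Nat.pow_pred_clog_lt_self one_lt_two hn1
    have hk := Nat.clog_pos one_lt_two hn1
    rw [← Nat.succ_pred_eq_of_pos hk, pow_succ]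
    omega
  · rw [Nat.clog_of_right_le_one hn1]
    omega

theorem isSackinMinimal_iff_height_le_and_le_minDepth (t : BTree) :
    t.IsSackinMinimal ↔
      t.height ≤ Nat.clog 2 t.leaves ∧ Nat.clog 2 t.leaves ≤ t.minDepth + 1 := by
  rw [← sackin_add_two_pow_eq_iff]
  have hlow := leaves_mul_succ_le_sackin_add_two_pow t (Nat.clog 2 t.leaves)
  constructor
  · intro hmin
    obtain ⟨t', hn, ht'⟩ := exists_leaves_eq_height_le_le_minDepth
      (two_pow_clog_le_two_mul t.leaves_pos) (Nat.le_pow_clog one_lt_two _)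
    rw [← sackin_add_two_pow_eq_iff, hn] at ht'
    have := hmin t' hn
    omega
  · intro h t' hn
    have := leaves_mul_succ_le_sackin_add_two_pow t' (Nat.clog 2 t.leaves)
    rw [hn] at this
    omega

theorem height_le_clog_and_clog_le_minDepth_iff (t : BTree) :
    (t.height ≤ Nat.clog 2 t.leaves ∧ Nat.clog 2 t.leaves ≤ t.minDepth + 1) ↔
      (t.height = Nat.clog 2 t.leaves ∧
        t.cherriesAt (Nat.clog 2 t.leaves) = t.leaves - 2 ^ (Nat.clog 2 t.leaves - 1)) := by
  set k := Nat.clog 2 t.leaves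
  have hkh : k ≤ t.height := Nat.clog_le_of_le_pow t.leaves_le_two_pow_height
  rcases Nat.eq_zero_or_pos k with hk0 | hk0
  · have hn : t.leaves ≤ 1 := (Nat.clog_le_iff_le_pow one_lt_two).mp hk0.le
    have := t.leaves_pos
    rw [hk0, cherriesAt_zero]
    omega
  · have hlt : 2 ^ (k - 1) < t.leaves := Nat.pow_lt_of_lt_clog (by omega)
    have hpow : 2 ^ k = 2 * 2 ^ (k - 1) := by
      rw [← pow_succ', Nat.sub_add_cancel hk0]
    constructor
    · rintro ⟨hh, hmin⟩
      have := (two_mul_leaves_eq_two_pow_add_cherriesAt_iff t hk0 hh).mpr hmin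
      omega
    · rintro ⟨hh, hc⟩
      exact ⟨hh.le, (two_mul_leaves_eq_two_pow_add_cherriesAt_iff t hk0 hh.le).mp (by omega)⟩

end BTree

/-- a rooted binary tree with `n` leaves has minimal Sackin index
iff its height equals `k = ⌈log₂ n⌉` and it has exactly `n − 2^{k−1}` cherries
of depth `k`. -/
theorem stmt16 (t : BTree) :
    (∀ t' : BTree, t'.leaves = t.leaves → t.sackin ≤ t'.sackin) ↔
      (t.height = Nat.clog 2 t.leaves ∧
       cherriesAt t (Nat.clog 2 t.leaves)
         = t.leaves - 2 ^ (Nat.clog 2 t.leaves - 1)) :=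
  t.isSackinMinimal_iff_height_le_and_le_minDepth.trans
    t.height_le_clog_and_clog_le_minDepth_iff
end
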